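/- The function q₀(x,y) = −2√2 x / (x² + √2 y² + 3/(2√2)) is a smooth function on ℝ² and solves the KP-I equation ∂ₓ⁴q − 2√2 ∂ₓ²q − 3√2 ∂ₓ((∂ₓq)²) − 2∂_y²q = 0 on all of ℝ². -/

import Mathlib

noncomputable section

namespace Stmt5

def pdx (f : ℝ → ℝ → ℝ) : ℝ → ℝ → ℝ := fun x y => deriv (fun t => f t y) x
def pdy (f : ℝ → ℝ → ℝ) : ℝ → ℝ → ℝ := fun x y => deriv (fun t => f x t) y

/-- the standard lump solution q₀(x,y) = −2√2 x / (x² + √2 y² + 3/(2√2)) -/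
def q0 : ℝ → ℝ → ℝ := fun x y =>
  -(2 * Real.sqrt 2 * x) / (x^2 + Real.sqrt 2 * y^2 + 3 / (2 * Real.sqrt 2))

/-! Auxiliary machinery -/

def S : ℝ := Real.sqrt 2

lemma hS0 : 0 < S := Real.sqrt_pos.mpr (by norm_num)

lemma hS2 : S ^ 2 = 2 := Real.sq_sqrt (by norm_num)

def Dd : ℝ → ℝ → ℝ := fun x y => x ^ 2 + (S * y ^ 2 + 3 * S / 4)

lemma hDpos (x y : ℝ) : 0 < Dd x y := by
  have h := hS0
  simp only [Dd]
  positivity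

lemma q0_eq (x y : ℝ) : q0 x y = (-2 * S) * x / Dd x y := by
  have h0 := hS0
  have h2 := hS2
  simp only [q0, Dd, S] at *
  rw [show x ^ 2 + Real.sqrt 2 * y ^ 2 + 3 / (2 * Real.sqrt 2)
      = x ^ 2 + (Real.sqrt 2 * y ^ 2 + 3 * Real.sqrt 2 / 4) from by
    field_simp
    linear_combination (-6 : ℝ) * h2]
  ring

lemma hasDerivAt_poly5 (a b c d e f x : ℝ) :
    HasDerivAt (fun t : ℝ => a * t ^ 5 + b * t ^ 4 + c * t ^ 3 + d * t ^ 2 + e * t ^ 1 + f)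
      (5 * a * x ^ 4 + 4 * b * x ^ 3 + 3 * c * x ^ 2 + 2 * d * x + e) x := by
  have h := ((((((hasDerivAt_pow 5 x).const_mul a).add
      ((hasDerivAt_pow 4 x).const_mul b)).add
      ((hasDerivAt_pow 3 x).const_mul c)).add
      ((hasDerivAt_pow 2 x).const_mul d)).add
      ((hasDerivAt_pow 1 x).const_mul e)).add (hasDerivAt_const x f)
  refine h.congr_deriv ?_
  push_cast
  ring

lemma hdCongr {f g : ℝ → ℝ} {f' g' x : ℝ} (h : HasDerivAt f f' x)
    (hfg : ∀ t, g t = f t) (h' : g' = f') : HasDerivAt g g' x := by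
  rw [h', funext hfg]; exact h

/-! Explicit formulas for the partial derivatives -/

def q1f : ℝ → ℝ → ℝ := fun x y =>
  (2 * S * x ^ 2 + (-2 * S ^ 2 * y ^ 2 - 3 / 2 * S ^ 2)) / (Dd x y) ^ 2

def q2f : ℝ → ℝ → ℝ := fun x y =>
  (-4 * S * x ^ 3 + 9 * S ^ 2 * x + 12 * S ^ 2 * x * y ^ 2) / (Dd x y) ^ 3

def q3f : ℝ → ℝ → ℝ := fun x y =>
  (12 * S * x ^ 4 - 54 * S ^ 2 * x ^ 2 - 72 * S ^ 2 * x ^ 2 * y ^ 2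
    + 27 / 4 * S ^ 3 + 18 * S ^ 3 * y ^ 2 + 12 * S ^ 3 * y ^ 4) / (Dd x y) ^ 4

def q4f : ℝ → ℝ → ℝ := fun x y =>
  (-48 * S * x ^ 5 + 360 * S ^ 2 * x ^ 3 + 480 * S ^ 2 * x ^ 3 * y ^ 2
    - 135 * S ^ 3 * x - 360 * S ^ 3 * x * y ^ 2 - 240 * S ^ 3 * x * y ^ 4) / (Dd x y) ^ 5

def p1f : ℝ → ℝ → ℝ := fun x y =>
  (4 * S ^ 2 * x * y) / (Dd x y) ^ 2

def p2f : ℝ → ℝ → ℝ := fun x y =>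
  (4 * S ^ 2 * x ^ 3 + 3 * S ^ 3 * x - 12 * S ^ 3 * x * y ^ 2) / (Dd x y) ^ 3

/-! Derivative computations -/

lemma hDdx (x y : ℝ) : HasDerivAt (fun t => Dd t y) (2 * x) x :=
  hdCongr (hasDerivAt_poly5 0 0 0 1 0 (S * y ^ 2 + 3 * S / 4) x) 
    (fun t => by simp only [Dd]; ring) (by ring)

lemma hDdy (x y : ℝ) : HasDerivAt (fun t => Dd x t) (2 * S * y) y :=
  hdCongr (hasDerivAt_poly5 0 0 0 S 0 (x ^ 2 + 3 * S / 4) y) 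
    (fun t => by simp only [Dd]; ring) (by ring)

lemma h1 (x y : ℝ) : HasDerivAt (fun t => q0 t y) (q1f x y) x := by
  have hne := (hDpos x y).ne'
  have hP : HasDerivAt (fun t : ℝ => (-2 * S) * t) (-2 * S) x :=
    hdCongr (hasDerivAt_poly5 0 0 0 0 (-2 * S) 0 x)  (fun t => by ring) (by ring)
  exact hdCongr (hP.div (hDdx x y) hne)  (fun t => q0_eq t y)
    (by simp only [q1f]; field_simp; (try simp only [Dd]); ring)

lemma h2 (x y : ℝ) : HasDerivAt (fun t => q1f t y) (q2f x y) x := by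
  have hne := (hDpos x y).ne'
  have hP : HasDerivAt (fun t : ℝ => 2 * S * t ^ 2 + (-2 * S ^ 2 * y ^ 2 - 3 / 2 * S ^ 2))
      (4 * S * x) x :=
    hdCongr (hasDerivAt_poly5 0 0 0 (2 * S) 0 (-2 * S ^ 2 * y ^ 2 - 3 / 2 * S ^ 2) x) 
      (fun t => by ring) (by ring)
  exact hdCongr (hP.div ((hDdx x y).pow 2) (pow_ne_zero 2 hne)) 
    (fun t => by simp only [q1f, Pi.div_apply, Pi.pow_apply]) (by simp only [q2f, Pi.pow_apply]; field_simp; (try simp only [Dd]); ring)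

lemma h3 (x y : ℝ) : HasDerivAt (fun t => q2f t y) (q3f x y) x := by
  have hne := (hDpos x y).ne'
  have hP : HasDerivAt
      (fun t : ℝ => -4 * S * t ^ 3 + 9 * S ^ 2 * t + 12 * S ^ 2 * t * y ^ 2)
      (-12 * S * x ^ 2 + 9 * S ^ 2 + 12 * S ^ 2 * y ^ 2) x :=
    hdCongr (hasDerivAt_poly5 0 0 (-4 * S) 0 (9 * S ^ 2 + 12 * S ^ 2 * y ^ 2) 0 x) 
      (fun t => by ring) (by ring)
  exact hdCongr (hP.div ((hDdx x y).pow 3) (pow_ne_zero 3 hne)) 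
    (fun t => by simp only [q2f, Pi.div_apply, Pi.pow_apply]) (by simp only [q3f, Pi.pow_apply]; field_simp; (try simp only [Dd]); ring)

lemma h4 (x y : ℝ) : HasDerivAt (fun t => q3f t y) (q4f x y) x := by
  have hne := (hDpos x y).ne'
  have hP : HasDerivAt
      (fun t : ℝ => 12 * S * t ^ 4 - 54 * S ^ 2 * t ^ 2 - 72 * S ^ 2 * t ^ 2 * y ^ 2
        + 27 / 4 * S ^ 3 + 18 * S ^ 3 * y ^ 2 + 12 * S ^ 3 * y ^ 4)
      (48 * S * x ^ 3 - 108 * S ^ 2 * x - 144 * S ^ 2 * x * y ^ 2) x :=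
    hdCongr (hasDerivAt_poly5 0 (12 * S) 0 (-54 * S ^ 2 - 72 * S ^ 2 * y ^ 2) 0
      (27 / 4 * S ^ 3 + 18 * S ^ 3 * y ^ 2 + 12 * S ^ 3 * y ^ 4) x) 
      (fun t => by ring) (by ring)
  exact hdCongr (hP.div ((hDdx x y).pow 4) (pow_ne_zero 4 hne)) 
    (fun t => by simp only [q3f, Pi.div_apply, Pi.pow_apply]) (by simp only [q4f, Pi.pow_apply]; field_simp; (try simp only [Dd]); ring)

lemma hy1 (x y : ℝ) : HasDerivAt (fun t => q0 x t) (p1f x y) y := by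
  have hne := (hDpos x y).ne'
  have hP : HasDerivAt (fun _ : ℝ => (-2 * S) * x) 0 y := hasDerivAt_const y _
  exact hdCongr (hP.div (hDdy x y) hne)  (fun t => q0_eq x t)
    (by simp only [p1f]; field_simp; (try simp only [Dd]); ring)

lemma hy2 (x y : ℝ) : HasDerivAt (fun t => p1f x t) (p2f x y) y := by
  have hne := (hDpos x y).ne'
  have hP : HasDerivAt (fun t : ℝ => 4 * S ^ 2 * x * t) (4 * S ^ 2 * x) y :=
    hdCongr (hasDerivAt_poly5 0 0 0 0 (4 * S ^ 2 * x) 0 y)  (fun t => by ring) (by ring)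
  exact hdCongr (hP.div ((hDdy x y).pow 2) (pow_ne_zero 2 hne)) 
    (fun t => by simp only [p1f, Pi.div_apply, Pi.pow_apply]) (by simp only [p2f, Pi.pow_apply]; field_simp; (try simp only [Dd]); ring)

lemma pdx_q0 : pdx q0 = q1f := by
  funext x y; exact (h1 x y).deriv

lemma pdx_q1 : pdx q1f = q2f := by
  funext x y; exact (h2 x y).deriv

lemma pdx_q2 : pdx q2f = q3f := by
  funext x y; exact (h3 x y).deriv

lemma pdx_q3 : pdx q3f = q4f := by
  funext x y; exact (h4 x y).deriv

lemma pdy_q0 : pdy q0 = p1f := by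
  funext x y; exact (hy1 x y).deriv

lemma pdy_p1 : pdy p1f = p2f := by
  funext x y; exact (hy2 x y).deriv

lemma pdx_sq (x y : ℝ) :
    pdx (fun a b => (q1f a b) ^ 2) x y = 2 * q1f x y * q2f x y := by
  have h := (h2 x y).pow 2
  simp only [pdx]
  rw [show (fun t => q1f t y ^ 2) = (fun t => q1f t y) ^ 2 from rfl, h.deriv]
  push_cast
  ring

theorem q0_solves_KPI :
    ContDiff ℝ (⊤ : ℕ∞) (Function.uncurry q0) ∧
    ∀ x y : ℝ,
      pdx (pdx (pdx (pdx q0))) x y - 2 * Real.sqrt 2 * pdx (pdx q0) x y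
        - 3 * Real.sqrt 2 * pdx (fun a b => (pdx q0 a b)^2) x y
        - 2 * pdy (pdy q0) x y = 0 := by
  constructor
  · have hq : Function.uncurry q0 = fun p : ℝ × ℝ => (-2 * S) * p.1 / Dd p.1 p.2 := by
      funext p
      exact q0_eq p.1 p.2
    rw [hq]
    apply ContDiff.div
    · exact contDiff_const.mul contDiff_fst
    · simp only [Dd]
      exact ((contDiff_fst.pow 2).add
        ((contDiff_const.mul (contDiff_snd.pow 2)).add contDiff_const))
    · intro p
      exact (hDpos p.1 p.2).ne'
  · intro x y
    have hne := (hDpos x y).ne'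
    have hs2 := hS2
    rw [pdx_q0, pdx_q1, pdx_q2, pdx_q3, pdy_q0, pdy_p1, pdx_sq,
      show Real.sqrt 2 = S from rfl]
    have key : (-48*S*x^5 + 360*S^2*x^3 + 480*S^2*x^3*y^2 - 135*S^3*x
          - 360*S^3*x*y^2 - 240*S^3*x*y^4)
        - 2*S*((-4*S*x^3 + 9*S^2*x + 12*S^2*x*y^2)*(Dd x y)^2)
        - 6*S*((2*S*x^2 + (-2*S^2*y^2 - 3/2*S^2))*(-4*S*x^3 + 9*S^2*x + 12*S^2*x*y^2))
        - 2*((4*S^2*x^3 + 3*S^3*x - 12*S^3*x*y^2)*(Dd x y)^2) = 0 := by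
      simp only [Dd]
      linear_combination (24*S*x^5 - 180*S^2*x^3 - 240*S^2*x^3*y^2 + 135/2*S^3*x
        + 180*S^3*x*y^2 + 120*S^3*x*y^4) * hs2
    have e : q4f x y - 2 * S * q2f x y - 3 * S * (2 * q1f x y * q2f x y) - 2 * p2f x y
        = ((-48*S*x^5 + 360*S^2*x^3 + 480*S^2*x^3*y^2 - 135*S^3*x
          - 360*S^3*x*y^2 - 240*S^3*x*y^4)
        - 2*S*((-4*S*x^3 + 9*S^2*x + 12*S^2*x*y^2)*(Dd x y)^2)
        - 6*S*((2*S*x^2 + (-2*S^2*y^2 - 3/2*S^2))*(-4*S*x^3 + 9*S^2*x + 12*S^2*x*y^2))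
        - 2*((4*S^2*x^3 + 3*S^3*x - 12*S^3*x*y^2)*(Dd x y)^2)) / (Dd x y)^5 := by
      simp only [q4f, q2f, q1f, p2f]
      field_simp
      ring
    rw [e, key, zero_div]

end Stmt5
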